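/- arXiv:1512.09035 — 2 statements merged into one kernel-verified Lean document; each statement's English description precedes it below -/
import Mathlib

section
/- Let p be the step distribution of an irreducible random walk on ℤ^d with finite support V. Let F be a facet of the convex hull of V, i.e., F = conv{v ∈ V : ⟨λ, v⟩ = c} for some unit vector λ ∈ ℝ^d and c ∈ ℝ with ⟨λ, v⟩ ≤ c for all v ∈ V. Then for every v ∈ V \ F and every sequence (δ_k) in M converging to a point of ∂M ∩ F, one has e^{⟨s(δ_k), v⟩} / κ(s(δ_k)) → 0 as k → ∞. -/
/- Framework for random walks on the integer lattice ℤ^d. -/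

noncomputable section

namespace RWalk

/-- `ℝ^d` with the Euclidean norm. -/
abbrev E (d : ℕ) : Type := EuclideanSpace ℝ (Fin d)

/-- The embedding of `ℤ^d` into `ℝ^d`. -/
def emb {d : ℕ} (x : Fin d → ℤ) : E d := WithLp.toLp 2 (fun i => (x i : ℝ))

/-- The bilinear pairing `⟨x, y⟩ = ∑ i, x i * y i` on `ℝ^d`. -/
def pairR {d : ℕ} (x y : E d) : ℝ := ∑ i, x i * y i

/-- The ℓ¹-norm on `ℝ^d`. -/
def l1 {d : ℕ} (x : E d) : ℝ := ∑ i, |x i|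

/-- The `n`-step transition function of the walk with step distribution `p`:
`tfun p 0 = δ₀`, hence `tfun p 1 = p` and
`tfun p (n+1) x = ∑ y, tfun p n y * p (x - y)`. -/
def tfun {d : ℕ} (p : (Fin d → ℤ) → ℝ) : ℕ → (Fin d → ℤ) → ℝ
  | 0, x => if x = 0 then 1 else 0
  | n + 1, x => ∑ᶠ y : Fin d → ℤ, tfun p n y * p (x - y)

/-- `κ(x) = ∑_{v ∈ V} p(v) e^{⟨x,v⟩}`. -/
def kappa {d : ℕ} (p : (Fin d → ℤ) → ℝ) (x : E d) : ℝ :=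
  ∑ᶠ v : Fin d → ℤ, p v * Real.exp (pairR x (emb v))

/-- `log κ`. -/
def logKappa {d : ℕ} (p : (Fin d → ℤ) → ℝ) : E d → ℝ := fun x => Real.log (kappa p x)

/-- `φ(δ) = sup_{x ∈ ℝ^d} (⟨x,δ⟩ - log κ(x))`. -/
def phi {d : ℕ} (p : (Fin d → ℤ) → ℝ) (δ : E d) : ℝ :=
  sSup (Set.range fun x : E d => pairR x δ - logKappa p x)

/-- `M`, the interior of the convex hull of the support `V` of `p`. -/
def Mset {d : ℕ} (p : (Fin d → ℤ) → ℝ) : Set (E d) :=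
  interior (convexHull ℝ (emb '' Function.support p))

/-- The Hessian matrix of `f` at `x`. -/
def hessMat {d : ℕ} (f : E d → ℝ) (x : E d) : Matrix (Fin d) (Fin d) ℝ :=
  fun i j => fderiv ℝ (fun y => fderiv ℝ f y (EuclideanSpace.single j 1)) x
      (EuclideanSpace.single i 1)

/-- The quadratic form `u ↦ uᵀ A u` of a matrix `A`. -/
def quadForm {d : ℕ} (A : Matrix (Fin d) (Fin d) ℝ) (u : E d) : ℝ :=
  ∑ i, ∑ j, u i * A i j * u j

/-- The second directional derivative `D_u² f(x)`. -/
def D2 {d : ℕ} (f : E d → ℝ) (x u : E d) : ℝ :=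
  iteratedDeriv 2 (fun t : ℝ => f (x + t • u)) 0

/-- Irreducibility: for every `x ∈ ℤ^d` there is `n ∈ ℕ` with `p(n; x) > 0`. -/
def Irred {d : ℕ} (p : (Fin d → ℤ) → ℝ) : Prop :=
  ∀ x : Fin d → ℤ, ∃ n : ℕ, 0 < n ∧ 0 < tfun p n x

/-- The step distribution of the simple random walk on `ℤ^d`. -/
def srw (d : ℕ) (v : Fin d → ℤ) : ℝ :=
  if (∑ i, (v i).natAbs) = 1 then (2 * (d : ℝ))⁻¹ else 0

/-! The ratio `e^{⟨s, v⟩} / κ(s)` is, up to the factor `p(v)`, the mass of `v` under the tilted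
law `w ↦ p(w) e^{⟨s, w⟩} / κ(s)` on `V`, whose mean is `∇ log κ(s) = δ`. As `⟨λ, ·⟩ ≤ c` on `V`
with strict inequality at `v ∉ F`, Markov's inequality for the gap `c - ⟨λ, w⟩` bounds that
mass by `(c - ⟨λ, δ⟩) / (p(v) (c - ⟨λ, v⟩))`, which tends to `0` because the limit of `δ_k`
lies in `F`, on the hyperplane `⟨λ, ·⟩ = c`. -/

section

variable {d : ℕ}

lemma pairR_eq_inner (x y : E d) : pairR x y = inner ℝ x y := by
  simp [pairR, PiLp.inner_apply, RCLike.inner_apply, mul_comm]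

lemma pairR_comm (x y : E d) : pairR x y = pairR y x := by
  rw [pairR_eq_inner, pairR_eq_inner, real_inner_comm]

lemma continuous_pairR (lam : E d) : Continuous (pairR lam) := by
  simp only [funext (pairR_eq_inner lam)]
  fun_prop

lemma convexHull_subset_setOf_pairR_eq {lam : E d} {c : ℝ} {S : Set (E d)}
    (hS : S ⊆ {x | pairR lam x = c}) : convexHull ℝ S ⊆ {x | pairR lam x = c} := by
  refine convexHull_min hS ?_
  have hset : {x : E d | pairR lam x = c} = (innerSL ℝ lam).toLinearMap ⁻¹' {c} := by
    ext x
    simp [pairR_eq_inner]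
  rw [hset]
  exact (convex_singleton c).linear_preimage _

variable {p : (Fin d → ℤ) → ℝ}

lemma kappa_eq_sum (hfin : (Function.support p).Finite) (x : E d) :
    kappa p x = ∑ w ∈ hfin.toFinset, p w * Real.exp (pairR x (emb w)) := by
  refine finsum_eq_sum_of_support_subset _ fun w hw => ?_
  rw [Set.Finite.coe_toFinset]
  exact Function.support_mul_subset_left _ _ hw

lemma kappa_pos (hp : ∀ v, 0 ≤ p v) (hfin : (Function.support p).Finite) {v : Fin d → ℤ}
    (hv : v ∈ Function.support p) (x : E d) : 0 < kappa p x := by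
  rw [kappa_eq_sum hfin]
  refine Finset.sum_pos' (fun w _ => by have := hp w; positivity)
    ⟨v, hfin.mem_toFinset.2 hv, ?_⟩
  have := (hp v).lt_of_ne' hv
  positivity

lemma hasFDerivAt_kappa (hfin : (Function.support p).Finite) (x : E d) :
    HasFDerivAt (kappa p)
      (∑ w ∈ hfin.toFinset, (p w * Real.exp (pairR x (emb w))) • innerSL ℝ (emb w)) x := by
  rw [show kappa p = fun y => ∑ w ∈ hfin.toFinset, p w * Real.exp (pairR y (emb w)) from
    funext (kappa_eq_sum hfin)]
  refine HasFDerivAt.fun_sum fun w _ => ?_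
  have hpair : HasFDerivAt (fun y : E d => pairR y (emb w)) (innerSL ℝ (emb w)) x := by
    simp only [pairR_comm _ (emb w), pairR_eq_inner]
    exact (innerSL ℝ (emb w)).hasFDerivAt
  simpa only [smul_smul] using hpair.exp.const_mul (p w)

lemma kappa_mul_pairR_gradient_logKappa (hp : ∀ v, 0 ≤ p v)
    (hfin : (Function.support p).Finite) {v : Fin d → ℤ} (hv : v ∈ Function.support p)
    (x y : E d) :
    kappa p x * pairR y (gradient (logKappa p) x) =
      ∑ w ∈ hfin.toFinset, p w * Real.exp (pairR x (emb w)) * pairR y (emb w) := by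
  have hκ := (kappa_pos hp hfin hv x).ne'
  have hlog : HasFDerivAt (logKappa p) _ x := (hasFDerivAt_kappa hfin x).log hκ
  rw [pairR_comm, pairR_eq_inner, gradient, hlog.fderiv, InnerProductSpace.toDual_symm_apply]
  simp only [_root_.smul_apply, _root_.sum_apply, innerSL_apply_apply, smul_eq_mul,
    ← pairR_eq_inner, pairR_comm (emb _) y]
  field_simp

lemma kappa_mul_sub_pairR_gradient_logKappa (hp : ∀ v, 0 ≤ p v)
    (hfin : (Function.support p).Finite) {v : Fin d → ℤ} (hv : v ∈ Function.support p)
    (lam x : E d) (c : ℝ) :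
    kappa p x * (c - pairR lam (gradient (logKappa p) x)) =
      ∑ w ∈ hfin.toFinset, p w * Real.exp (pairR x (emb w)) * (c - pairR lam (emb w)) := by
  rw [mul_sub, kappa_mul_pairR_gradient_logKappa hp hfin hv, kappa_eq_sum hfin, Finset.sum_mul,
    ← Finset.sum_sub_distrib]
  exact Finset.sum_congr rfl fun _ _ => by ring

lemma exp_pairR_div_kappa_le (hp : ∀ v, 0 ≤ p v) (hfin : (Function.support p).Finite)
    {lam : E d} {c : ℝ} (hc : ∀ w ∈ Function.support p, pairR lam (emb w) ≤ c)
    {v : Fin d → ℤ} (hv : v ∈ Function.support p) (hvc : pairR lam (emb v) < c) (x : E d) :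
    Real.exp (pairR x (emb v)) / kappa p x ≤
      (c - pairR lam (gradient (logKappa p) x)) / (p v * (c - pairR lam (emb v))) := by
  have hκ := kappa_pos hp hfin hv x
  have hpv := (hp v).lt_of_ne' hv
  have hgap := sub_pos.2 hvc
  have hmarkov : p v * Real.exp (pairR x (emb v)) * (c - pairR lam (emb v)) ≤
      ∑ w ∈ hfin.toFinset, p w * Real.exp (pairR x (emb w)) * (c - pairR lam (emb w)) := by
    refine Finset.single_le_sum (f := fun w => p w * Real.exp (pairR x (emb w)) *
      (c - pairR lam (emb w))) (fun w hw => ?_) (hfin.mem_toFinset.2 hv)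
    have := hp w
    have := sub_nonneg.2 (hc w (hfin.mem_toFinset.1 hw))
    positivity
  rw [← kappa_mul_sub_pairR_gradient_logKappa hp hfin hv] at hmarkov
  rw [div_le_div_iff₀ hκ (by positivity)]
  linarith

lemma pairR_lt_of_emb_notMem_convexHull {lam : E d} {c : ℝ}
    (hc : ∀ w ∈ Function.support p, pairR lam (emb w) ≤ c) {v : Fin d → ℤ}
    (hv : v ∈ Function.support p)
    (hvF : emb v ∉ convexHull ℝ
      (emb '' {w : Fin d → ℤ | w ∈ Function.support p ∧ pairR lam (emb w) = c})) :
    pairR lam (emb v) < c :=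
  (hc v hv).lt_of_ne fun hvc => hvF (subset_convexHull ℝ _ ⟨v, ⟨hv, hvc⟩, rfl⟩)

end

theorem statement14_general (d : ℕ) (p : (Fin d → ℤ) → ℝ) (hp : ∀ v, 0 ≤ p v)
    (hfin : (Function.support p).Finite)
    (lam : E d) (c : ℝ)
    (hc : ∀ v ∈ Function.support p, pairR lam (emb v) ≤ c)
    (F : Set (E d))
    (hF : F = convexHull ℝ
      (emb '' {v : Fin d → ℤ | v ∈ Function.support p ∧ pairR lam (emb v) = c}))
    (v : Fin d → ℤ) (hv : v ∈ Function.support p) (hvF : emb v ∉ F)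
    (δseq : ℕ → E d)
    (δlim : E d) (hlim : δlim ∈ frontier (Mset p) ∩ F)
    (hconv : Filter.Tendsto δseq Filter.atTop (nhds δlim))
    (s : ℕ → E d) (hs : ∀ k, gradient (logKappa p) (s k) = δseq k) :
    Filter.Tendsto (fun k => Real.exp (pairR (s k) (emb v)) / kappa p (s k))
      Filter.atTop (nhds 0) := by
  subst hF
  have hvc := pairR_lt_of_emb_notMem_convexHull hc hv hvF
  have hδlim : pairR lam δlim = c :=
    convexHull_subset_setOf_pairR_eq (by rintro _ ⟨w, ⟨-, hw⟩, rfl⟩; exact hw) hlim.2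
  have hgap : Filter.Tendsto (fun k => (c - pairR lam (δseq k)) / (p v * (c - pairR lam (emb v))))
      Filter.atTop (nhds 0) := by
    have hpair := ((continuous_pairR lam).tendsto δlim).comp hconv
    rw [hδlim] at hpair
    simpa using (hpair.const_sub c).div_const (p v * (c - pairR lam (emb v)))
  refine squeeze_zero (fun k => (div_pos (Real.exp_pos _) (kappa_pos hp hfin hv _)).le)
    (fun k => ?_) hgap
  simpa only [hs k] using exp_pairR_div_kappa_le hp hfin hc hv hvc (s k)

/-- If `F` is a facet of the convex hull of `V` (cut out by the supporting unit functional
`lam` at level `c`), `v ∈ V \ F`, and `δ_k ∈ M` converges to a point of `∂M ∩ F`, then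
`e^{⟨s(δ_k), v⟩} / κ(s(δ_k)) → 0`. -/
theorem statement14 (d : ℕ) (p : (Fin d → ℤ) → ℝ) (hp : ∀ v, 0 ≤ p v)
    (hfin : (Function.support p).Finite) (hsum : ∑ᶠ v, p v = 1) (hirr : Irred p)
    (lam : E d) (hlam : ‖lam‖ = 1) (c : ℝ)
    (hc : ∀ v ∈ Function.support p, pairR lam (emb v) ≤ c)
    (F : Set (E d))
    (hF : F = convexHull ℝ
      (emb '' {v : Fin d → ℤ | v ∈ Function.support p ∧ pairR lam (emb v) = c}))
    (v : Fin d → ℤ) (hv : v ∈ Function.support p) (hvF : emb v ∉ F)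
    (δseq : ℕ → E d) (hδ : ∀ k, δseq k ∈ Mset p)
    (δlim : E d) (hlim : δlim ∈ frontier (Mset p) ∩ F)
    (hconv : Filter.Tendsto δseq Filter.atTop (nhds δlim))
    (s : ℕ → E d) (hs : ∀ k, gradient (logKappa p) (s k) = δseq k) :
    Filter.Tendsto (fun k => Real.exp (pairR (s k) (emb v)) / kappa p (s k))
      Filter.atTop (nhds 0) :=
  statement14_general d p hp hfin lam c hc F hF v hv hvF δseq δlim hlim hconv s hs

end RWalk
end
end

section
/- Let p be the step distribution of an irreducible random walk on ℤ^d with finite support V. Then for all n ∈ ℕ and all x ∈ ℤ^d with δ = x/n ∈ M, one has p(n; x) ≤ e^{−n φ(δ)}. -/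
/- Framework for random walks on the integer lattice ℤ^d. -/

noncomputable section

namespace RWalk

/- Chernoff bound: tilting by `v ↦ e^{⟨θ,v⟩}` turns the `n`-fold convolution `p(n; ·)` into
`κ(θ)^n`, so the single term at `x` gives `p(n;x) e^{⟨θ,x⟩} ≤ κ(θ)^n`; taking logarithms and
optimising over `θ` yields `log p(n;x) ≤ -n φ(x/n)`. -/

theorem finsum_conv_mul_addChar {G R : Type*} [AddCommGroup G] [CommSemiring R]
    [NoZeroDivisors R] {f g : G → R} (hf : f.support.Finite) (hg : g.support.Finite)
    (χ : AddChar G R) :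
    ∑ᶠ x, (∑ᶠ y, f y * g (x - y)) * χ x = (∑ᶠ y, f y * χ y) * ∑ᶠ v, g v * χ v := by
  have hshift (y : G) : ∑ᶠ x, g (x - y) * χ x = χ y * ∑ᶠ v, g v * χ v := by
    rw [mul_finsum, ← finsum_comp_equiv (Equiv.addRight y)]
    refine finsum_congr fun v => ?_
    simp only [Equiv.coe_addRight, add_sub_cancel_right, AddChar.map_add_eq_mul]
    ring
  calc ∑ᶠ x, (∑ᶠ y, f y * g (x - y)) * χ x
      = ∑ᶠ x, ∑ y ∈ hf.toFinset, f y * g (x - y) * χ x := by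
        refine finsum_congr fun x => ?_
        rw [finsum_mul, finsum_eq_sum_of_support_subset _ fun y hy => ?_]
        simpa using left_ne_zero_of_mul (left_ne_zero_of_mul hy)
    _ = ∑ y ∈ hf.toFinset, ∑ᶠ x, f y * g (x - y) * χ x := by
        refine finsum_sum_comm _ _ fun y _ => ?_
        exact (hg.preimage sub_left_injective.injOn).subset fun x hx =>
          right_ne_zero_of_mul (left_ne_zero_of_mul hx)
    _ = ∑ y ∈ hf.toFinset, f y * χ y * ∑ᶠ v, g v * χ v := by
        refine Finset.sum_congr rfl fun y _ => ?_
        simp_rw [mul_assoc, ← mul_finsum, hshift]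
    _ = (∑ᶠ y, f y * χ y) * ∑ᶠ v, g v * χ v := by
        rw [← Finset.sum_mul, finsum_eq_sum_of_support_subset (fun y => f y * χ y)]
        exact fun y hy => by simpa using left_ne_zero_of_mul hy

variable {d : ℕ} {p : (Fin d → ℤ) → ℝ}

theorem tfun_nonneg (hp : ∀ v, 0 ≤ p v) (n : ℕ) (x : Fin d → ℤ) : 0 ≤ tfun p n x := by
  induction n generalizing x with
  | zero => simp only [tfun]; split <;> norm_num
  | succ n ih => exact finsum_nonneg fun y => mul_nonneg (ih y) (hp _)

theorem support_tfun_finite (hfin : p.support.Finite) (n : ℕ) : (tfun p n).support.Finite := by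
  induction n with
  | zero => exact (Set.finite_singleton 0).subset fun x hx => by_contra fun h => hx (if_neg h)
  | succ n ih =>
    refine (ih.add hfin).subset fun x hx => ?_
    obtain ⟨y, hy⟩ : ∃ y, tfun p n y * p (x - y) ≠ 0 :=
      not_forall.mp fun h => hx (finsum_eq_zero_of_forall_eq_zero h)
    exact ⟨y, left_ne_zero_of_mul hy, x - y, right_ne_zero_of_mul hy, add_sub_cancel y x⟩

theorem finsum_tfun_mul_addChar (hfin : p.support.Finite) (χ : AddChar (Fin d → ℤ) ℝ)
    (n : ℕ) : ∑ᶠ x, tfun p n x * χ x = (∑ᶠ v, p v * χ v) ^ n := by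
  induction n with
  | zero => rw [finsum_eq_single _ 0 fun x hx => by simp [tfun, hx]]; simp [tfun]
  | succ n ih =>
    simp only [tfun]
    rw [finsum_conv_mul_addChar (support_tfun_finite hfin n) hfin, ih, pow_succ]

theorem pairR_add (θ u v : E d) : pairR θ (u + v) = pairR θ u + pairR θ v := by
  simp only [pairR, PiLp.add_apply, mul_add, Finset.sum_add_distrib]

theorem pairR_smul (θ : E d) (c : ℝ) (v : E d) : pairR θ (c • v) = c * pairR θ v := by
  simp only [pairR, PiLp.smul_apply, smul_eq_mul, Finset.mul_sum]
  exact Finset.sum_congr rfl fun i _ => by ring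

theorem emb_add (a b : Fin d → ℤ) : emb (a + b) = emb a + emb b := by
  ext i; simp [emb]

def expTilt (θ : E d) : AddChar (Fin d → ℤ) ℝ where
  toFun v := Real.exp (pairR θ (emb v))
  map_zero_eq_one' := by simp [pairR, emb]
  map_add_eq_mul' a b := by rw [emb_add, pairR_add, Real.exp_add]

theorem tfun_mul_exp_le_kappa_pow (hp : ∀ v, 0 ≤ p v) (hfin : p.support.Finite) (θ : E d)
    (n : ℕ) (x : Fin d → ℤ) : tfun p n x * Real.exp (pairR θ (emb x)) ≤ kappa p θ ^ n := by
  have hsupp : (fun y => tfun p n y * expTilt θ y).support.Finite :=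
    (support_tfun_finite hfin n).subset fun y hy => left_ne_zero_of_mul hy
  calc tfun p n x * Real.exp (pairR θ (emb x)) ≤ ∑ᶠ y, tfun p n y * expTilt θ y :=
        single_le_finsum x hsupp fun y => mul_nonneg (tfun_nonneg hp n y) (Real.exp_pos _).le
    _ = kappa p θ ^ n := finsum_tfun_mul_addChar hfin (expTilt θ) n

theorem mul_phi_le_neg_log_tfun (hp : ∀ v, 0 ≤ p v) (hfin : p.support.Finite) {n : ℕ}
    (hn : 0 < n) {x : Fin d → ℤ} (hx : 0 < tfun p n x) :
    n * phi p ((n : ℝ)⁻¹ • emb x) ≤ -Real.log (tfun p n x) := by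
  have hnR : (0 : ℝ) < n := Nat.cast_pos.mpr hn
  rw [← le_div_iff₀' hnR]
  refine csSup_le (Set.range_nonempty _) ?_
  rintro _ ⟨θ, rfl⟩
  show pairR θ _ - logKappa p θ ≤ _
  have hlog : Real.log (tfun p n x) + pairR θ (emb x) ≤ n * logKappa p θ := by
    have := Real.log_le_log (by positivity) (tfun_mul_exp_le_kappa_pow hp hfin θ n x)
    rwa [Real.log_mul hx.ne' (Real.exp_pos _).ne', Real.log_exp, Real.log_pow] at this
  rw [pairR_smul, le_div_iff₀' hnR, mul_sub, ← mul_assoc, mul_inv_cancel₀ hnR.ne', one_mul]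
  linarith

theorem statement19_general (d : ℕ) (p : (Fin d → ℤ) → ℝ) (hp : ∀ v, 0 ≤ p v)
    (hfin : (Function.support p).Finite) :
    ∀ n : ℕ, 0 < n → ∀ x : Fin d → ℤ, (n : ℝ)⁻¹ • emb x ∈ Mset p →
      tfun p n x ≤ Real.exp (-(n * phi p ((n : ℝ)⁻¹ • emb x))) := by
  intro n hn x _
  rcases (tfun_nonneg hp n x).eq_or_lt with h0 | hpos
  · exact h0 ▸ (Real.exp_pos _).le
  calc tfun p n x = Real.exp (Real.log (tfun p n x)) := (Real.exp_log hpos).symm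
    _ ≤ _ := Real.exp_le_exp.mpr (le_neg.mpr (mul_phi_le_neg_log_tfun hp hfin hn hpos))

/-- Global upper bound: `p(n;x) ≤ e^{-n φ(x/n)}` whenever `x/n ∈ M`. -/
theorem statement19 (d : ℕ) (p : (Fin d → ℤ) → ℝ) (hp : ∀ v, 0 ≤ p v)
    (hfin : (Function.support p).Finite) (hsum : ∑ᶠ v, p v = 1) (hirr : Irred p) :
    ∀ n : ℕ, 0 < n → ∀ x : Fin d → ℤ, (n : ℝ)⁻¹ • emb x ∈ Mset p →
      tfun p n x ≤ Real.exp (-(n * phi p ((n : ℝ)⁻¹ • emb x))) :=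
  statement19_general d p hp hfin

end RWalk
end
end
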